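/- FastLSU on arbitrary chunks is equivalent to BH on the full set (Theorem 3): let U be the union over i = 1,…,c of the chunk-selected multisets {p ∈ C_i : p < (r*_{C_i} + m − m_i)·α/m}. Then applying the step-up search with denominators relative to the full count m to U, i.e., taking r*_C = max{i ∈ {1,…,|U|} : p_(i:U) < i·α/m} (0 if none), yields r*_C = r_C, and the resulting selected set {p ∈ U : p < r_C·α/m} equals the global BH rejection set {p ∈ C : p < r_C·α/m}. -/

import Mathlib

open scoped Classical

/-- `#S(t)`: the number of elements of the multiset `C` that are strictly less than `t`. -/
noncomputable def countBelow (C : Multiset ℝ) (t : ℝ) : ℕ :=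
  (C.filter (fun p => p < t)).card

/-- The `k`-th smallest element (1-indexed order statistic, with multiplicity) of `D`. -/
noncomputable def orderStat (D : Multiset ℝ) (k : ℕ) : ℝ :=
  (D.sort (· ≤ ·)).getD (k - 1) 0

/-- The Benjamini–Hochberg index at level `α`:
`max {i ∈ {1,…,m} : p_(i) < i·α/m}`, with value `0` if this set is empty. -/
noncomputable def rBH (α : ℝ) (C : Multiset ℝ) : ℕ :=
  ((Finset.Icc 1 C.card).filter
    (fun i => orderStat C i < (i : ℝ) * α / (C.card : ℝ))).sup id

/-- The chunk-level BH index of the chunk `D` inside a total problem of `m` p-values: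
`max {r ∈ {1,…,|D|} : p_(r:D) < (r + m − |D|)·α/m}`, with value `0` if this set is empty. -/
noncomputable def rStarChunk (α : ℝ) (m : ℕ) (D : Multiset ℝ) : ℕ :=
  ((Finset.Icc 1 D.card).filter
    (fun r => orderStat D r < ((r + m - D.card : ℕ) : ℝ) * α / (m : ℝ))).sup id

/-!
Everything is read off the counting function `#D(t) = |{p ∈ D : p < t}|`: for `1 ≤ i ≤ |D|`,
`p_(i:D) < t` iff `i ≤ #D(t)`, so a step-up index is the largest `i` with `i ≤ #D(thr i)`.
Let `r = r_C` and `t = r·α/m`. A chunk `C_i` has at least `r - (m - m_i)` p-values below `t`,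
so the chunk index `r + m_i - m` qualifies and `r*_{C_i} + m - m_i ≥ r`: every chunk cut-off is
at least `t`. Hence `U` and `C` agree below `t`, so `U` has `r` p-values below `t`, while
`U ≤ C` has fewer than `i` below `i·α/m` for every `i > r`.
-/

open Finset

theorem List.Pairwise.getElem_lt_iff_lt_countP {α : Type*} [LinearOrder α] {l : List α}
    (hl : l.Pairwise (· ≤ ·)) (t : α) {j : ℕ} (hj : j < l.length) :
    l[j] < t ↔ j < l.countP (· < t) := by
  induction l generalizing j with
  | nil => simp at hj
  | cons a l ih =>
    rw [List.pairwise_cons] at hl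
    by_cases ha : a < t
    · cases j with
      | zero => simp [ha]
      | succ j => simp [ha, ih hl.2 (by simpa using hj)]
    · have hnone : ∀ b ∈ a :: l, ¬ b < t := by
        simp only [List.mem_cons, forall_eq_or_imp]
        exact ⟨ha, fun b hb hbt => ha ((hl.1 b hb).trans_lt hbt)⟩
      have hzero : (a :: l).countP (· < t) = 0 := List.countP_eq_zero.mpr (by simpa using hnone)
      simp only [hzero, Nat.not_lt_zero, iff_false]
      exact hnone _ (List.getElem_mem hj)

theorem Multiset.filter_finsetSum {ι α : Type*} (s : Finset ι) (f : ι → Multiset α)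
    (p : α → Prop) [DecidablePred p] :
    (∑ i ∈ s, f i).filter p = ∑ i ∈ s, (f i).filter p :=
  map_sum (⟨⟨Multiset.filter p, Multiset.filter_zero p⟩, Multiset.filter_add p⟩ :
    Multiset α →+ Multiset α) f s

theorem Multiset.filter_lt_filter_lt_of_le {α : Type*} [Preorder α] [DecidableLT α]
    (D : Multiset α) {s t : α} (h : t ≤ s) :
    (D.filter (· < s)).filter (· < t) = D.filter (· < t) := by
  rw [Multiset.filter_filter]
  exact Multiset.filter_congr fun p _ => and_iff_left_of_imp fun hp => hp.trans_le h

section countBelow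

variable {C D : Multiset ℝ}

lemma countBelow_eq_countP_sort (D : Multiset ℝ) (t : ℝ) :
    countBelow D t = (D.sort (· ≤ ·)).countP (· < t) := by
  rw [countBelow, ← Multiset.countP_eq_card_filter, ← Multiset.coe_countP, Multiset.sort_eq]

lemma orderStat_lt_iff_le_countBelow {i : ℕ} (hi : 1 ≤ i) (hiD : i ≤ D.card) (t : ℝ) :
    orderStat D i < t ↔ i ≤ countBelow D t := by
  have hj : i - 1 < (D.sort (· ≤ ·)).length := by rw [Multiset.length_sort]; omega
  rw [orderStat, List.getD_eq_getElem _ _ hj,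
    (D.pairwise_sort _).getElem_lt_iff_lt_countP t hj, ← countBelow_eq_countP_sort]
  omega

lemma countBelow_le_card (D : Multiset ℝ) (t : ℝ) : countBelow D t ≤ D.card :=
  Multiset.card_le_card (Multiset.filter_le _ _)

lemma countBelow_mono (h : D ≤ C) (t : ℝ) : countBelow D t ≤ countBelow C t :=
  Multiset.card_le_card (Multiset.filter_le_filter _ h)

lemma countBelow_le_countBelow_add_card_sub (h : D ≤ C) (t : ℝ) :
    countBelow C t ≤ countBelow D t + (C.card - D.card) := by
  have hsplit : countBelow C t = countBelow D t + countBelow (C - D) t := by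
    rw [countBelow, countBelow, countBelow, ← Multiset.card_add, ← Multiset.filter_add,
      add_tsub_cancel_of_le h]
  rw [hsplit, ← Multiset.card_sub h]
  exact Nat.add_le_add_left (countBelow_le_card _ t) _

end countBelow

noncomputable def stepUpIndex (D : Multiset ℝ) (thr : ℕ → ℝ) : ℕ :=
  ((Icc 1 D.card).filter (fun i => orderStat D i < thr i)).sup id

section stepUpIndex

variable {D : Multiset ℝ} {thr : ℕ → ℝ}

lemma mem_stepUpIndex_filter_iff {i : ℕ} :
    i ∈ (Icc 1 D.card).filter (fun i => orderStat D i < thr i) ↔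
      1 ≤ i ∧ i ≤ countBelow D (thr i) := by
  rw [mem_filter, mem_Icc]
  constructor
  · rintro ⟨⟨hi, hiD⟩, hlt⟩
    exact ⟨hi, (orderStat_lt_iff_le_countBelow hi hiD _).mp hlt⟩
  · rintro ⟨hi, hcount⟩
    have hiD := hcount.trans (countBelow_le_card D _)
    exact ⟨⟨hi, hiD⟩, (orderStat_lt_iff_le_countBelow hi hiD _).mpr hcount⟩

lemma le_stepUpIndex {i : ℕ} (hi : 1 ≤ i) (hcount : i ≤ countBelow D (thr i)) :
    i ≤ stepUpIndex D thr :=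
  le_sup (f := id) (mem_stepUpIndex_filter_iff.mpr ⟨hi, hcount⟩)

lemma stepUpIndex_le_countBelow : stepUpIndex D thr ≤ countBelow D (thr (stepUpIndex D thr)) := by
  obtain hempty | ⟨i, hi, hsup⟩ :=
    ((Icc 1 D.card).filter (fun i => orderStat D i < thr i)).eq_empty_or_nonempty.imp_right
      (fun hne => exists_mem_eq_sup _ hne id)
  · simp [stepUpIndex, hempty]
  · rw [stepUpIndex, hsup]
    exact (mem_stepUpIndex_filter_iff.mp hi).2

lemma countBelow_lt_of_stepUpIndex_lt {i : ℕ} (hi : stepUpIndex D thr < i) :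
    countBelow D (thr i) < i := by
  by_contra! hcount
  exact (le_stepUpIndex (by omega) hcount).not_gt hi

lemma stepUpIndex_eq {r : ℕ} (hr : r ≤ countBelow D (thr r))
    (hgt : ∀ i, r < i → countBelow D (thr i) < i) : stepUpIndex D thr = r := by
  refine le_antisymm ?_ ?_
  · by_contra! hlt
    exact (hgt _ hlt).not_ge stepUpIndex_le_countBelow
  · rcases Nat.eq_zero_or_pos r with rfl | hr0
    · exact Nat.zero_le _
    · exact le_stepUpIndex hr0 hr

end stepUpIndex

lemma rBH_eq_stepUpIndex {α : ℝ} {C : Multiset ℝ} {m : ℕ} (hm : m = C.card) :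
    rBH α C = stepUpIndex C (fun i => i * α / m) := by
  subst hm
  rfl

lemma rBH_le_countBelow {α : ℝ} {C : Multiset ℝ} {m : ℕ} (hm : m = C.card) :
    rBH α C ≤ countBelow C (rBH α C * α / m) :=
  rBH_eq_stepUpIndex hm ▸ stepUpIndex_le_countBelow

lemma countBelow_lt_of_rBH_lt {α : ℝ} {C : Multiset ℝ} {m i : ℕ} (hm : m = C.card)
    (hi : rBH α C < i) : countBelow C (i * α / m) < i :=
  countBelow_lt_of_stepUpIndex_lt (rBH_eq_stepUpIndex hm ▸ hi)

lemma rBH_add_card_le_rStarChunk_add {α : ℝ} {C D : Multiset ℝ} {m : ℕ} (hD : D ≤ C)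
    (hm : m = C.card) : rBH α C + D.card ≤ rStarChunk α m D + m := by
  have hr := rBH_le_countBelow (α := α) hm
  generalize rBH α C = r at hr ⊢
  have hDm : D.card ≤ m := hm ▸ Multiset.card_le_card hD
  by_cases hsmall : r + D.card ≤ m
  · omega
  -- at the chunk index `k = r + |D| - m` the chunk threshold `(k + m - |D|)·α/m` is `r·α/m`
  have hk : r + D.card - m ≤ countBelow D (((r + D.card - m + m - D.card : ℕ) : ℝ) * α / m) := by
    rw [show r + D.card - m + m - D.card = r by omega]
    have := countBelow_le_countBelow_add_card_sub hD (r * α / m)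
    omega
  have hk_le : r + D.card - m ≤ rStarChunk α m D := le_stepUpIndex (by omega) hk
  omega

theorem fastLSU_chunks_equiv_global_BH_general
    (α : ℝ) (hα0 : 0 < α)
    (c : ℕ) (Ch : Fin c → Multiset ℝ)
    (C : Multiset ℝ) (hC : C = ∑ i, Ch i)
    (m : ℕ) (hm : m = C.card)
    (U : Multiset ℝ)
    (hU : U = ∑ i : Fin c, (Ch i).filter
        (fun p => p < ((rStarChunk α m (Ch i) + m - (Ch i).card : ℕ) : ℝ) * α / (m : ℝ))) :
    ((Finset.Icc 1 U.card).filter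
        (fun i => orderStat U i < (i : ℝ) * α / (m : ℝ))).sup id = rBH α C ∧
    U.filter (fun p => p < (rBH α C : ℝ) * α / (m : ℝ))
      = C.filter (fun p => p < (rBH α C : ℝ) * α / (m : ℝ)) := by
  have hchunk_le : ∀ i, Ch i ≤ C := fun i =>
    hC ▸ single_le_sum (fun _ _ => Multiset.zero_le _) (mem_univ i)
  have hthr : ∀ i, (rBH α C : ℝ) * α / m
      ≤ ((rStarChunk α m (Ch i) + m - (Ch i).card : ℕ) : ℝ) * α / m := fun i => by
    have := rBH_add_card_le_rStarChunk_add (α := α) (hchunk_le i) hm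
    gcongr
    omega
  set t : ℝ := rBH α C * α / m
  have hfilter : U.filter (· < t) = C.filter (· < t) := by
    rw [hU, hC, Multiset.filter_finsetSum, Multiset.filter_finsetSum]
    exact sum_congr rfl fun i _ => (Ch i).filter_lt_filter_lt_of_le (hthr i)
  refine ⟨?_, hfilter⟩
  have hUC : U ≤ C := hU ▸ hC ▸ sum_le_sum fun i _ => Multiset.filter_le _ _
  have hr : rBH α C ≤ countBelow U t := by
    rw [countBelow, hfilter]
    exact rBH_le_countBelow hm
  exact stepUpIndex_eq hr fun i hi =>
    (countBelow_mono hUC _).trans_lt (countBelow_lt_of_rBH_lt hm hi)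

/-- Theorem 3 of the paper: FastLSU on arbitrary chunks is equivalent to BH
on the full set: letting `U` be the union over chunks of the chunk-selected multisets,
the step-up search on `U` with denominators relative to the full count `m` yields the
global BH index `r_C`, and the resulting selected set equals the global BH rejection set. -/
theorem fastLSU_chunks_equiv_global_BH
    (α : ℝ) (hα0 : 0 < α) (hα1 : α < 1)
    (c : ℕ) (Ch : Fin c → Multiset ℝ)
    (hvals : ∀ i, ∀ p ∈ Ch i, 0 ≤ p ∧ p ≤ 1)
    (C : Multiset ℝ) (hC : C = ∑ i, Ch i)
    (m : ℕ) (hm : m = C.card)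
    (U : Multiset ℝ)
    (hU : U = ∑ i : Fin c, (Ch i).filter
        (fun p => p < ((rStarChunk α m (Ch i) + m - (Ch i).card : ℕ) : ℝ) * α / (m : ℝ))) :
    ((Finset.Icc 1 U.card).filter
        (fun i => orderStat U i < (i : ℝ) * α / (m : ℝ))).sup id = rBH α C ∧
    U.filter (fun p => p < (rBH α C : ℝ) * α / (m : ℝ))
      = C.filter (fun p => p < (rBH α C : ℝ) * α / (m : ℝ)) :=
  fastLSU_chunks_equiv_global_BH_general α hα0 c Ch C hC m hm U hU
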